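/- Let N ≥ 3 be an integer, μ ∈ (0,1/4], and α := 1/2 + √(1/4 − μ). Then the function K(x) := x_N^{α}·|x|^{2−N−2α} satisfies ΔK(x) + (μ/x_N²)·K(x) = 0 for every x ∈ ℝ^N with x_N > 0. -/

import Mathlib

open MeasureTheory Metric Set

/-- The Laplacian of `u : ℝ^N → ℝ`, as the sum of the second partial derivatives
in the coordinate directions. -/
noncomputable def lap {N : ℕ} (u : EuclideanSpace ℝ (Fin N) → ℝ)
    (x : EuclideanSpace ℝ (Fin N)) : ℝ :=
  ∑ i : Fin N, fderiv ℝ (fun y => fderiv ℝ u y (EuclideanSpace.single i 1)) x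
    (EuclideanSpace.single i 1)

/-- The last coordinate index of `Fin N`. -/
def lastIdx (N : ℕ) (h : 0 < N) : Fin N := ⟨N - 1, by omega⟩

/-! Write the kernel as `x_N^α (|x|²)^b` with `2b = 2 - N - 2α`. Where `x_j ≠ 0`,
`Δ(x_j^a (|x|²)^b) = a(a-1) x_j^(a-2) (|x|²)^b + 2b(N + 2a + 2b - 2) x_j^a (|x|²)^(b-1)`.
The choice of `b` kills the second term, and `α(α-1) = -μ` turns the first into
`-μ K / x_N²`. -/

open Topology

section

variable {N : ℕ}

noncomputable def coordNormKernel (j : Fin N) (a b : ℝ) (y : EuclideanSpace ℝ (Fin N)) : ℝ :=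
  y j ^ a * (‖y‖ ^ 2) ^ b

variable {j : Fin N} {a b : ℝ} {y : EuclideanSpace ℝ (Fin N)}

lemma normSq_ne_zero_of_coord_ne_zero (hy : y j ≠ 0) : ‖y‖ ^ 2 ≠ 0 :=
  pow_ne_zero 2 (norm_ne_zero_iff.mpr (by rintro rfl; exact hy rfl))

lemma coordNormKernel_sub_one_mul_coord (hy : y j ≠ 0) :
    coordNormKernel j (a - 1) b y * y j = coordNormKernel j a b y := by
  rw [coordNormKernel, coordNormKernel, Real.rpow_sub_one hy, mul_right_comm,
    div_mul_cancel₀ _ hy]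

lemma coordNormKernel_sub_one_mul_normSq (hy : y j ≠ 0) :
    coordNormKernel j a (b - 1) y * ‖y‖ ^ 2 = coordNormKernel j a b y := by
  have hnorm : ‖y‖ ^ 2 ≠ 0 := normSq_ne_zero_of_coord_ne_zero hy
  rw [coordNormKernel, coordNormKernel, Real.rpow_sub_one hnorm, mul_assoc,
    div_mul_cancel₀ _ hnorm]

lemma hasFDerivAt_coordNormKernel (hy : y j ≠ 0) :
    HasFDerivAt (coordNormKernel j a b)
      ((a * coordNormKernel j (a - 1) b y) • EuclideanSpace.proj j
        + (2 * b * coordNormKernel j a (b - 1) y) • innerSL ℝ y) y := by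
  have hnorm : ‖y‖ ^ 2 ≠ 0 := normSq_ne_zero_of_coord_ne_zero hy
  have hcoord :=
    (EuclideanSpace.proj (𝕜 := ℝ) j).hasFDerivAt (x := y) |>.rpow_const (p := a) (Or.inl hy)
  have hpow := (hasStrictFDerivAt_norm_sq y).hasFDerivAt.rpow_const (p := b) (Or.inl hnorm)
  refine (hcoord.mul hpow).congr_fderiv ?_
  ext v
  simp only [add_apply, smul_apply, PiLp.proj_apply, coe_innerSL_apply, smul_eq_mul,
    nsmul_eq_mul, coordNormKernel]
  ring

lemma fderiv_coordNormKernel_single (hy : y j ≠ 0) (i : Fin N) :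
    fderiv ℝ (coordNormKernel j a b) y (EuclideanSpace.single i 1)
      = (if i = j then a else 0) * coordNormKernel j (a - 1) b y
        + 2 * b * (coordNormKernel j a (b - 1) y * y i) := by
  rw [(hasFDerivAt_coordNormKernel hy).fderiv]
  simp only [add_apply, smul_apply, PiLp.proj_apply, coe_innerSL_apply,
    EuclideanSpace.inner_single_right, PiLp.single_apply, smul_eq_mul, Real.ringHom_apply,
    eq_comm (a := j)]
  split_ifs <;> ring

lemma fderiv_fderiv_coordNormKernel_single (hy : y j ≠ 0) (i : Fin N) :
    fderiv ℝ (fun z => fderiv ℝ (coordNormKernel j a b) z (EuclideanSpace.single i 1)) y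
        (EuclideanSpace.single i 1)
      = 2 * b * coordNormKernel j a (b - 1) y
        + 4 * b * (b - 1) * (coordNormKernel j a (b - 1 - 1) y * y i ^ 2)
        + if i = j then a * (a - 1) * coordNormKernel j (a - 1 - 1) b y
            + 4 * a * b * (coordNormKernel j (a - 1) (b - 1) y * y i) else 0 := by
  have hnear : ∀ᶠ z in 𝓝 y, z j ≠ 0 :=
    (EuclideanSpace.proj (𝕜 := ℝ) j).continuous.continuousAt.eventually_ne hy
  have hpartial : (fun z => fderiv ℝ (coordNormKernel j a b) z (EuclideanSpace.single i 1))
      =ᶠ[𝓝 y] fun z => (if i = j then a else 0) * coordNormKernel j (a - 1) b z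
        + 2 * b * (coordNormKernel j a (b - 1) z * z i) := by
    filter_upwards [hnear] with z hz using fderiv_coordNormKernel_single hz i
  have hderiv : HasFDerivAt (fun z => (if i = j then a else 0) * coordNormKernel j (a - 1) b z
      + 2 * b * (coordNormKernel j a (b - 1) z * z i)) _ y :=
    ((hasFDerivAt_coordNormKernel (a := a - 1) (b := b) hy).const_mul
      (if i = j then a else 0)).fun_add
      (((hasFDerivAt_coordNormKernel (a := a) (b := b - 1) hy).fun_mul
        (EuclideanSpace.proj (𝕜 := ℝ) i).hasFDerivAt).const_mul (2 * b))
  rw [hpartial.fderiv_eq, hderiv.fderiv]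
  simp only [add_apply, smul_apply, PiLp.proj_apply, coe_innerSL_apply,
    EuclideanSpace.inner_single_right, PiLp.single_apply, smul_eq_mul, Real.ringHom_apply,
    eq_comm (a := j)]
  split_ifs <;> ring

lemma lap_coordNormKernel (hy : y j ≠ 0) :
    lap (coordNormKernel j a b) y
      = a * (a - 1) * coordNormKernel j (a - 1 - 1) b y
        + 2 * b * (N + 2 * a + 2 * b - 2) * coordNormKernel j a (b - 1) y := by
  have hnormSq := coordNormKernel_sub_one_mul_normSq (a := a) (b := b - 1) hy
  have hcoord := coordNormKernel_sub_one_mul_coord (a := a) (b := b - 1) hy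
  simp only [lap, fderiv_fderiv_coordNormKernel_single hy, Finset.sum_add_distrib,
    Finset.sum_ite_eq', Finset.mem_univ, if_true, ← Finset.mul_sum, Finset.sum_const,
    Finset.card_univ, Fintype.card_fin, nsmul_eq_mul, ← EuclideanSpace.real_norm_sq_eq]
  linear_combination (4 * b * (b - 1)) * hnormSq + (4 * a * b) * hcoord

end

/-- The half-space Martin kernel `K(x) = x_N^α |x|^{2-N-2α}` with pole at the boundary
point `0` is `L_μ`-harmonic on the half-space. -/
theorem stmt_18 (N : ℕ) (hN : 3 ≤ N) (μ α : ℝ)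
    (hμ : μ ∈ Set.Ioc (0:ℝ) (1/4)) (hα : α = 1/2 + Real.sqrt (1/4 - μ)) :
    ∀ x : EuclideanSpace ℝ (Fin N), 0 < x (lastIdx N (by omega)) →
      lap (fun y => (y (lastIdx N (by omega))) ^ α * ‖y‖ ^ (2 - (N : ℝ) - 2 * α)) x
        + (μ / (x (lastIdx N (by omega))) ^ 2) *
            ((x (lastIdx N (by omega))) ^ α * ‖x‖ ^ (2 - (N : ℝ) - 2 * α))
        = 0 := by
  intro x hx
  set j := lastIdx N (by omega)
  set b := (2 - (N : ℝ) - 2 * α) / 2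
  have hkernel :
      (fun y : EuclideanSpace ℝ (Fin N) => y j ^ α * ‖y‖ ^ (2 - (N : ℝ) - 2 * α))
        = coordNormKernel j α b := by
    funext y
    rw [coordNormKernel, ← Real.rpow_natCast_mul (norm_nonneg y)]
    congr 2
    push_cast
    ring
  have hcoord : coordNormKernel j (α - 1 - 1) b x * x j ^ 2 = coordNormKernel j α b x := by
    rw [sq, ← mul_assoc, coordNormKernel_sub_one_mul_coord hx.ne',
      coordNormKernel_sub_one_mul_coord hx.ne']
  have hαμ : α * (α - 1) = -μ := by
    have hsqrt := Real.sq_sqrt (show (0:ℝ) ≤ 1/4 - μ by linarith [hμ.2])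
    rw [hα]
    linear_combination hsqrt
  have hb : (N : ℝ) + 2 * α + 2 * b - 2 = 0 := by ring
  rw [hkernel, congrFun hkernel x, lap_coordNormKernel hx.ne', hαμ, hb, mul_zero, zero_mul,
    add_zero, ← hcoord]
  field_simp
  ring
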